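/- arXiv:1112.1545 — 7 statements merged into one kernel-verified Lean document; each statement's English description precedes it below -/
import Mathlib

section
/- Every tournament on 5 vertices, except the regular tournament T5 (in which every vertex has out-degree and in-degree exactly 2), contains a copy of the antidirected path p4 of length 4. -/
/-- The underlying simple graph of a digraph given as a relation. -/
def underlyingGraph {V : Type*} (D : V → V → Prop) : SimpleGraph V where
  Adj a b := a ≠ b ∧ (D a b ∨ D b a)
  symm := ⟨fun _ _ h => ⟨h.1.symm, h.2.symm⟩⟩
  loopless := ⟨fun _ h => h.1 rfl⟩

/-- `D` contains a copy of the antidirected path `p4`: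
vertices x,y,z,v,w with arcs (y,x),(y,z),(v,z),(v,w). -/
def HasP4 {V : Type*} (D : V → V → Prop) : Prop :=
  ∃ x y z v w : V,
    x ≠ y ∧ x ≠ z ∧ x ≠ v ∧ x ≠ w ∧ y ≠ z ∧ y ≠ v ∧ y ≠ w ∧ z ≠ v ∧ z ≠ w ∧ v ≠ w ∧
    D y x ∧ D y z ∧ D v z ∧ D v w

/-!
A vertex `y` of a non-regular 5-tournament has out-degree at least 3, since the out-degrees
sum to `10`. Let `a, b, c` be out-neighbours of `y` and `d` the fifth vertex. Two of the arcs
between `d` and `a, b, c` point the same way, say those at `a` and `b`. If `d → a, b`, then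
`c ← y → a ← d → b` is a `p4`. If `a, b → d` with `a → b`, then `c ← y → b ← a → d` is one.
-/

section Tournament

variable {V : Type*} {D : V → V → Prop}

noncomputable def outDegree (D : V → V → Prop) (v : V) : ℕ := {w | D v w}.ncard

noncomputable def inDegree (D : V → V → Prop) (v : V) : ℕ := {w | D w v}.ncard

theorem sum_outDegree_eq_sum_inDegree [Fintype V] :
    ∑ v, outDegree D v = ∑ v, inDegree D v := by
  classical
  simp only [outDegree, inDegree, Set.ncard_eq_toFinset_card', Set.toFinset_ofPred,
    Finset.card_filter]
  exact Finset.sum_comm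

theorem outDegree_add_inDegree [Finite V] (hirr : ∀ a, ¬ D a a)
    (htour : ∀ a b : V, a ≠ b → (D a b ↔ ¬ D b a)) (v : V) :
    outDegree D v + inDegree D v = Nat.card V - 1 := by
  have hunion : {w | D v w} ∪ {w | D w v} = {v}ᶜ := by
    ext w
    by_cases hw : w = v
    · simp [hw, hirr]
    · simp [hw, htour w v hw, em]
  have hdisj : Disjoint {w | D v w} {w | D w v} :=
    Set.disjoint_left.2 fun w hvw hwv => ((htour v w fun e => hirr v (e ▸ hvw)).1 hvw) hwv
  rw [outDegree, inDegree, ← Set.ncard_union_eq hdisj, hunion, Set.ncard_compl,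
    Set.ncard_singleton]

theorem two_mul_sum_outDegree [Fintype V] (hirr : ∀ a, ¬ D a a)
    (htour : ∀ a b : V, a ≠ b → (D a b ↔ ¬ D b a)) :
    2 * ∑ v, outDegree D v = Fintype.card V * (Fintype.card V - 1) := by
  rw [two_mul]
  nth_rw 2 [sum_outDegree_eq_sum_inDegree]
  simp [← Finset.sum_add_distrib, outDegree_add_inDegree hirr htour]

theorem exists_three_le_outDegree [Fintype V] (hcard : Fintype.card V = 5)
    (hirr : ∀ a, ¬ D a a) (htour : ∀ a b : V, a ≠ b → (D a b ↔ ¬ D b a))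
    (hreg : ¬ ∀ v, outDegree D v = 2 ∧ inDegree D v = 2) :
    ∃ v, 3 ≤ outDegree D v := by
  by_contra! hlt
  have hsum : ∑ v, outDegree D v = ∑ _v : V, 2 := by
    have := two_mul_sum_outDegree hirr htour
    simp only [hcard, Finset.sum_const, Finset.card_univ, smul_eq_mul] at this ⊢
    omega
  have hout := (Finset.sum_eq_sum_iff_of_le fun v _ => Nat.le_of_lt_succ (hlt v)).1 hsum
  refine hreg fun v => ⟨hout v (Finset.mem_univ v), ?_⟩
  have := outDegree_add_inDegree hirr htour v
  rw [Nat.card_eq_fintype_card, hcard, hout v (Finset.mem_univ v)] at this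
  omega

theorem hasP4_of_outNeighbors_of_iff (hirr : ∀ a, ¬ D a a)
    (htour : ∀ a b : V, a ≠ b → (D a b ↔ ¬ D b a)) {y a b c d : V}
    (hab : a ≠ b) (hac : a ≠ c) (hbc : b ≠ c) (hda : d ≠ a) (hdb : d ≠ b) (hdc : d ≠ c)
    (hdy : d ≠ y) (hya : D y a) (hyb : D y b) (hyc : D y c) (hd : D d a ↔ D d b) :
    HasP4 D := by
  by_cases hda' : D d a
  · exact ⟨c, y, a, d, b, by grind⟩
  have had : D a d := (htour a d hda.symm).2 hda'
  have hbd : D b d := (htour b d hdb.symm).2 (hd.not.1 hda')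
  by_cases hab' : D a b
  · exact ⟨c, y, b, a, d, by grind⟩
  · exact ⟨c, y, a, b, d, by grind⟩

theorem hasP4_of_three_outNeighbors (hirr : ∀ a, ¬ D a a)
    (htour : ∀ a b : V, a ≠ b → (D a b ↔ ¬ D b a)) {y a b c d : V}
    (hab : a ≠ b) (hac : a ≠ c) (hbc : b ≠ c) (hda : d ≠ a) (hdb : d ≠ b) (hdc : d ≠ c)
    (hdy : d ≠ y) (hya : D y a) (hyb : D y b) (hyc : D y c) : HasP4 D := by
  by_cases hab' : D d a ↔ D d b
  · exact hasP4_of_outNeighbors_of_iff hirr htour hab hac hbc hda hdb hdc hdy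
      hya hyb hyc hab'
  by_cases hac' : D d a ↔ D d c
  · exact hasP4_of_outNeighbors_of_iff hirr htour hac hab hbc.symm hda hdc hdb hdy
      hya hyc hyb hac'
  have hbc' : D d b ↔ D d c := by tauto
  exact hasP4_of_outNeighbors_of_iff hirr htour hbc hab.symm hac.symm hdb hdc hda hdy
    hyb hyc hya hbc'

end Tournament

/-- Every 5-tournament which is not the regular tournament `T5` (in which every
vertex has out-degree and in-degree exactly 2) contains a copy of `p4`. -/
theorem stmt_0 {V : Type*} [Fintype V] (D : V → V → Prop)
    (hcard : Fintype.card V = 5)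
    (hirr : ∀ a, ¬ D a a)
    (htour : ∀ a b : V, a ≠ b → (D a b ↔ ¬ D b a))
    (hnotT5 : ¬ ∀ v : V, {w | D v w}.ncard = 2 ∧ {w | D w v}.ncard = 2) :
    HasP4 D := by
  classical
  obtain ⟨y, hy⟩ := exists_three_le_outDegree hcard hirr htour hnotT5
  obtain ⟨a, b, c, hya, hyb, hyc, hab, hac, hbc⟩ := (Set.two_lt_ncard_iff).1 hy
  have hfour : ({y, a, b, c} : Finset V).card < (Finset.univ : Finset V).card :=
    Finset.card_le_four.trans_lt (by simp [hcard])
  obtain ⟨d, -, hd⟩ := Finset.exists_mem_notMem_of_card_lt_card hfour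
  simp only [Finset.mem_insert, Finset.mem_singleton, not_or] at hd
  exact hasP4_of_three_outNeighbors hirr htour hab hac hbc hd.2.1 hd.2.2.1 hd.2.2.2 hd.1
    hya hyb hyc
end

section
/- If D is a digraph which does not contain a tournament of order 2n+1 (for n ≥ 2) as a subdigraph, and every vertex of D has in-degree at most n, then the chromatic number of the underlying graph of D is at most 2n. -/
/-!
Each vertex has in-degree at most `n`, so every finite set `S` of vertices spans at most `n |S|`
arcs: the underlying graph has average degree at most `2n` on every subgraph. In a minimal
uncolourable `S` every vertex therefore has degree exactly `2n` in `S` (a vertex of smaller degree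
can be coloured greedily last), and no vertex disconnects `S` (colourings of the two sides glue
after permuting colours). Since `S` contains no `K_{2n+1}`, Lovász's argument for Brooks' theorem
applies: some `v` has non-adjacent neighbours `a`, `b` such that `S - a - b` is connected. Give `a`
and `b` the same colour, colour the rest of `S - v` so that every vertex still has an uncoloured
neighbour when it is coloured, and finally `v` sees at most `2n - 1` colours.
-/

open Finset

namespace SimpleGraph

variable {V : Type*} {G : SimpleGraph V}

def ReachIn (G : SimpleGraph V) (A : Set V) : V → V → Prop :=
  Relation.ReflTransGen fun u v => u ∈ A ∧ v ∈ A ∧ G.Adj u v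

def compIn (G : SimpleGraph V) (A : Set V) (a : V) : Set V := {z | z ∈ A ∧ G.ReachIn A a z}

def ConnectedIn (G : SimpleGraph V) (A : Set V) : Prop := ∀ u ∈ A, ∀ v ∈ A, G.ReachIn A u v

section Connectivity

variable {A B K : Set V} {a b u v w z : V}

lemma ReachIn.symm (h : G.ReachIn A u v) : G.ReachIn A v u := by
  induction h with
  | refl => exact .refl
  | tail _ hst ih => exact .head ⟨hst.2.1, hst.1, hst.2.2.symm⟩ ih

lemma ReachIn.trans (h : G.ReachIn A u v) (h' : G.ReachIn A v w) : G.ReachIn A u w :=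
  Relation.ReflTransGen.trans h h'

lemma ReachIn.mono (hAB : A ⊆ B) (h : G.ReachIn A u v) : G.ReachIn B u v :=
  Relation.ReflTransGen.mono (fun _ _ hs => ⟨hAB hs.1, hAB hs.2.1, hs.2.2⟩) _ _ h

lemma ReachIn.mem_of_closed (hcl : ∀ u ∈ K, ∀ w ∈ A, G.Adj u w → w ∈ K) (hu : u ∈ K)
    (h : G.ReachIn A u v) : v ∈ K := by
  induction h with
  | refl => exact hu
  | tail _ hst ih => exact hcl _ ih _ hst.2.1 hst.2.2

lemma _root_.Set.mem_diff_pair {x y : V} (hu : u ∈ A) (hx : u ≠ x) (hy : u ≠ y) :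
    u ∈ A \ {x, y} :=
  ⟨hu, by rintro (h | h); exacts [hx h, hy h]⟩

lemma mem_compIn_self (ha : a ∈ A) : a ∈ G.compIn A a := ⟨ha, .refl⟩

lemma compIn_subset : G.compIn A a ⊆ A := fun _ hz => hz.1

lemma adj_mem_compIn (hz : z ∈ G.compIn A a) (hw : w ∈ A) (hadj : G.Adj z w) :
    w ∈ G.compIn A a :=
  ⟨hw, hz.2.tail ⟨hz.1, hw, hadj⟩⟩

lemma adj_mem_compIn_or (hz : z ∈ G.compIn (A \ B) a) (hw : w ∈ A) (hadj : G.Adj z w) :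
    w ∈ G.compIn (A \ B) a ∨ w ∈ B := by
  by_cases hwB : w ∈ B
  · exact .inr hwB
  · exact .inl (adj_mem_compIn hz ⟨hw, hwB⟩ hadj)

lemma compIn_subset_compIn (hAB : A ⊆ B) (hz : z ∈ G.compIn B a) :
    G.compIn A z ⊆ G.compIn B a :=
  fun _ hu => ⟨hAB hu.1, hz.2.trans (hu.2.mono hAB)⟩

lemma reachIn_compIn (hz : z ∈ G.compIn A a) : G.ReachIn (G.compIn A a) a z := by
  obtain ⟨-, hr⟩ := hz
  induction hr with
  | refl => exact .refl
  | @tail b c hab hbc ih =>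
    exact ih.tail ⟨⟨hbc.1, hab⟩, ⟨hbc.2.1, hab.tail hbc⟩, hbc.2.2⟩

lemma reachIn_of_adj_compIn (hK : G.compIn A z ⊆ B) (ha : a ∈ B) (hb : b ∈ B)
    (hu : u ∈ G.compIn A z) (hw : w ∈ G.compIn A z) (hau : G.Adj a u) (hbw : G.Adj b w) :
    G.ReachIn B a b :=
  (Relation.ReflTransGen.single ⟨ha, hK hu, hau⟩).trans
    ((((reachIn_compIn hu).symm.trans (reachIn_compIn hw)).mono hK).tail ⟨hK hw, hb, hbw.symm⟩)

lemma ConnectedIn.subset_of_closed (hA : G.ConnectedIn A) (hzK : z ∈ K) (hzA : z ∈ A)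
    (hcl : ∀ u ∈ K, ∀ w ∈ A, G.Adj u w → w ∈ K) : A ⊆ K :=
  fun _ hw => (hA z hzA _ hw).mem_of_closed hcl hzK

lemma ConnectedIn.exists_adj_notMem (hA : G.ConnectedIn A) (hz : z ∈ A ∩ K) (hv : v ∈ A)
    (hvK : v ∉ K) : ∃ u ∈ A ∩ K, ∃ w ∈ A, G.Adj u w ∧ w ∉ K := by
  by_contra! hno
  exact hvK (hA.subset_of_closed hz hz.1 (fun u hu w hw hadj => ⟨hw, hno u hu w hw hadj⟩) hv).2

end Connectivity

section Fans

open scoped Classical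

variable {S : Finset V} {K : Set V} {a b p q v x y z : V}

structure IsLovaszTriple (G : SimpleGraph V) (S : Finset V) (v a b : V) : Prop where
  mem : v ∈ S
  mem_left : a ∈ S
  mem_right : b ∈ S
  adj_left : G.Adj v a
  adj_right : G.Adj v b
  ne : a ≠ b
  not_adj : ¬ G.Adj a b
  connectedIn : G.ConnectedIn (↑S \ {a, b})

structure IsSeparatedFan (G : SimpleGraph V) (S : Finset V) (x y a b : V) : Prop where
  mem : x ∈ S
  mem_sep : y ∈ S
  ne : x ≠ y
  mem_left : a ∈ S
  mem_right : b ∈ S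
  left_ne : a ≠ y
  right_ne : b ≠ y
  adj_left : G.Adj x a
  adj_right : G.Adj x b
  notMem_compIn : b ∉ G.compIn (↑S \ {x, y}) a

lemma exists_adj_ne_ne (h : 3 ≤ #{u ∈ S | G.Adj z u}) (p q : V) :
    ∃ w ∈ S, G.Adj z w ∧ w ≠ p ∧ w ≠ q := by
  obtain ⟨w, hw, hpq⟩ := exists_mem_notMem_of_card_lt_card (card_le_two.trans_lt h)
  simp only [mem_filter, mem_insert, mem_singleton, not_or] at hw hpq
  exact ⟨w, hw.1, hw.2, hpq⟩

/-- As `S - a` is connected, `p` has a neighbour in `K` and one outside `K ∪ {a}`. -/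
lemma exists_isSeparatedFan_of_closed (h2 : ∀ s, G.ConnectedIn (↑S \ {s})) (hp : p ∈ S)
    (ha : a ∈ S) (hpa : p ≠ a) (hz : z ∈ K) (hK : K ⊆ ↑S \ {p, a})
    (hcl : ∀ u ∈ K, ∀ w ∈ S, G.Adj u w → w ∈ K ∨ w ∈ ({p, a} : Set V))
    (hq : q ∈ (↑S \ {a} : Set V)) (hqp : q ≠ p) (hqK : q ∉ K) :
    ∃ w w', G.IsSeparatedFan S p a w w' ∧ G.compIn (↑S \ {p, a}) w ⊆ K := by
  have hzA : z ∈ (↑S \ {a} : Set V) := ⟨(hK hz).1, fun h => (hK hz).2 (.inr h)⟩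
  obtain ⟨w, hwK, hpw⟩ : ∃ w ∈ K, G.Adj p w := by
    by_contra! hno
    refine hqK ((h2 a).subset_of_closed hz hzA (fun u hu w hw hadj => ?_) hq)
    rcases hcl u hu w hw.1 hadj with h | rfl | rfl
    exacts [h, (hno u hu hadj.symm).elim, (hw.2 rfl).elim]
  obtain ⟨w', hw'S, hpw', hw'K, hw'a⟩ : ∃ w' ∈ S, G.Adj p w' ∧ w' ∉ K ∧ w' ≠ a := by
    by_contra! hno
    have hsub := (h2 a).subset_of_closed (K := insert p K) (.inr hz) hzA (by
      rintro u (rfl | hu) w hw hadj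
      · by_contra hwK
        exact hw.2 (hno w hw.1 hadj fun h => hwK (.inr h))
      · rcases hcl u hu w hw.1 hadj with h | rfl | rfl
        exacts [.inr h, .inl rfl, (hw.2 rfl).elim])
    rcases hsub hq with h | h
    exacts [hqp h, hqK h]
  have hsub : G.compIn (↑S \ {p, a}) w ⊆ K := fun _ hu =>
    hu.2.mem_of_closed (fun u hu w hw hadj => (hcl u hu w hw.1 hadj).resolve_right hw.2) hwK
  exact ⟨w, w', ⟨hp, ha, hpa, (hK hwK).1, hw'S, fun h => (hK hwK).2 (.inr h), hw'a, hpw, hpw',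
    fun h => hw'K (hsub h)⟩, hsub⟩

lemma exists_isSeparatedFan_of_compIn (h2 : ∀ s, G.ConnectedIn (↑S \ {s})) (hp : p ∈ S)
    (ha : a ∈ S) (hq : q ∈ S) (hpa : p ≠ a) (hqp : q ≠ p) (hqa : q ≠ a)
    (hz : z ∈ (↑S \ {p, q, a} : Set V))
    (hK : ∀ u ∈ G.compIn (↑S \ {p, q, a}) z, ¬ G.Adj u q) :
    ∃ w w', G.IsSeparatedFan S p a w w' ∧
      G.compIn (↑S \ {p, a}) w ⊆ G.compIn (↑S \ {p, q, a}) z :=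
  exists_isSeparatedFan_of_closed h2 hp ha hpa (mem_compIn_self hz)
    (fun u hu => ⟨hu.1.1, fun h => hu.1.2 <| by
      rcases h with h | h; exacts [.inl h, .inr (.inr h)]⟩)
    (fun u hu w hw hadj => by
      rcases adj_mem_compIn_or hu hw hadj with h | rfl | rfl | rfl
      exacts [.inl h, .inr (.inl rfl), (hK u hu hadj).elim, .inr (.inr rfl)])
    ⟨hq, hqa⟩ hqp (fun h => h.1.2 (.inr (.inl rfl)))

namespace IsSeparatedFan

variable (h2 : ∀ s, G.ConnectedIn (↑S \ {s}))
include h2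

/-- A component of `S \ {a, b}` avoiding `x` and `y` cannot be attached to both `a` and `b`, so
the other one of them would be a cut vertex. -/
lemma mem_compIn_or (hf : G.IsSeparatedFan S x y a b) (hz : z ∈ (↑S \ {a, b} : Set V)) :
    x ∈ G.compIn (↑S \ {a, b}) z ∨ y ∈ G.compIn (↑S \ {a, b}) z := by
  by_contra! hxy
  set K := G.compIn (↑S \ {a, b}) z
  have hKxy : K ⊆ ↑S \ {x, y} := fun u hu =>
    ⟨hu.1.1, by rintro (rfl | rfl); exacts [hxy.1 hu, hxy.2 hu]⟩
  have hxa := G.ne_of_adj hf.adj_left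
  have hxb := G.ne_of_adj hf.adj_right
  have haxy : a ∈ (↑S \ {x, y} : Set V) := Set.mem_diff_pair hf.mem_left hxa.symm hf.left_ne
  have hbxy : b ∈ (↑S \ {x, y} : Set V) := Set.mem_diff_pair hf.mem_right hxb.symm hf.right_ne
  have hK : (∀ u ∈ K, ¬ G.Adj u a) ∨ (∀ u ∈ K, ¬ G.Adj u b) := by
    by_contra! h
    obtain ⟨⟨u, hu, hua⟩, ⟨w, hw, hwb⟩⟩ := h
    exact hf.notMem_compIn ⟨hbxy, reachIn_of_adj_compIn hKxy haxy hbxy hu hw hua.symm hwb.symm⟩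
  rcases hK with h | h
  · refine hxy.1 ((h2 b).subset_of_closed (mem_compIn_self hz)
      ⟨hz.1, fun h' => hz.2 (.inr h')⟩ ?_
      ⟨hf.mem, fun h' => hxb h'⟩)
    intro u hu w hw hadj
    refine (adj_mem_compIn_or hu hw.1 hadj).resolve_right ?_
    rintro (rfl | rfl)
    exacts [h u hu hadj, hw.2 rfl]
  · refine hxy.1 ((h2 a).subset_of_closed (mem_compIn_self hz)
      ⟨hz.1, fun h' => hz.2 (.inl h')⟩ ?_
      ⟨hf.mem, fun h' => hxa h'⟩)
    intro u hu w hw hadj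
    refine (adj_mem_compIn_or hu hw.1 hadj).resolve_right ?_
    rintro (rfl | rfl)
    exacts [hw.2 rfl, h u hu hadj]

lemma isLovaszTriple (hf : G.IsSeparatedFan S x y a b)
    (hxy : y ∈ G.compIn (↑S \ {a, b}) x) : G.IsLovaszTriple S x a b := by
  have haC : a ∈ G.compIn (↑S \ {x, y}) a :=
    mem_compIn_self (Set.mem_diff_pair hf.mem_left (G.ne_of_adj hf.adj_left).symm hf.left_ne)
  have hx : ∀ u ∈ (↑S \ {a, b} : Set V), G.ReachIn (↑S \ {a, b}) u x := fun u hu => by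
    rcases hf.mem_compIn_or h2 hu with h | h
    exacts [h.2, h.2.trans hxy.2.symm]
  refine ⟨hf.mem, hf.mem_left, hf.mem_right, hf.adj_left, hf.adj_right, ?_, ?_,
    fun u hu w hw => (hx u hu).trans (hx w hw).symm⟩
  · rintro rfl
    exact hf.notMem_compIn haC
  · intro hab
    exact hf.notMem_compIn (adj_mem_compIn haC
      (Set.mem_diff_pair hf.mem_right (G.ne_of_adj hf.adj_right).symm hf.right_ne) hab)

/-- The component `K` of a neighbour of `a` in `S \ {x, y, a}` is attached to at most one of `x`,
`y`, say `p`; then `p` has neighbours separated by `{p, a}`, one of them with component `K`, which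
is smaller than that of `a` in `S \ {x, y}`. -/
lemma exists_ncard_lt (hdeg : ∀ z ∈ S, 3 ≤ #{u ∈ S | G.Adj z u})
    (hf : G.IsSeparatedFan S x y a b) (hxy : y ∉ G.compIn (↑S \ {a, b}) x) :
    ∃ p q a' b', G.IsSeparatedFan S p q a' b' ∧
      (G.compIn (↑S \ {p, q}) a').ncard < (G.compIn (↑S \ {x, y}) a).ncard := by
  set C := G.compIn (↑S \ {x, y}) a
  have hxa := G.ne_of_adj hf.adj_left
  have haC : a ∈ C := mem_compIn_self (Set.mem_diff_pair hf.mem_left hxa.symm hf.left_ne)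
  obtain ⟨z, hzS, haz, hzx, hzy⟩ := exists_adj_ne_ne (hdeg a hf.mem_left) x y
  have hz : z ∈ (↑S \ {x, y, a} : Set V) :=
    ⟨hzS, by rintro (h | h | h); exacts [hzx h, hzy h, G.ne_of_adj haz h.symm]⟩
  set K := G.compIn (↑S \ {x, y, a}) z
  have hKC : K ⊆ C := compIn_subset_compIn (fun u hu => ⟨hu.1, fun h => hu.2 <| by
      rcases h with h | h; exacts [.inl h, .inr (.inl h)]⟩)
    (adj_mem_compIn haC (Set.mem_diff_pair hzS hzx hzy) haz)
  have hlt : ∀ {K'}, K' ⊆ K → K'.ncard < C.ncard := fun hK' =>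
    Set.ncard_lt_ncard ((Set.ssubset_iff_of_subset (hK'.trans hKC)).2
      ⟨a, haC, fun h => (hK' h).1.2 (.inr (.inr rfl))⟩)
      (S.finite_toSet.subset (compIn_subset.trans Set.sdiff_subset))
  have hxab : x ∈ (↑S \ {a, b} : Set V) :=
    Set.mem_diff_pair hf.mem hxa (G.ne_of_adj hf.adj_right)
  have hyab : y ∈ (↑S \ {a, b} : Set V) :=
    Set.mem_diff_pair hf.mem_sep hf.left_ne.symm hf.right_ne.symm
  have hKab : K ⊆ ↑S \ {a, b} := fun u hu => ⟨hu.1.1, by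
    rintro (rfl | rfl); exacts [hu.1.2 (.inr (.inr rfl)), hf.notMem_compIn (hKC hu)]⟩
  rcases (by
      by_contra! h
      obtain ⟨⟨u, hu, huy⟩, ⟨w, hw, hwx⟩⟩ := h
      exact hxy ⟨hyab, reachIn_of_adj_compIn hKab hxab hyab hw hu hwx.symm huy.symm⟩ :
      (∀ u ∈ K, ¬ G.Adj u y) ∨ (∀ u ∈ K, ¬ G.Adj u x)) with h | h
  · obtain ⟨w, w', hf', hsub⟩ := exists_isSeparatedFan_of_compIn h2 hf.mem hf.mem_left
      hf.mem_sep hxa hf.ne.symm hf.left_ne.symm hz h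
    exact ⟨x, a, w, w', hf', hlt hsub⟩
  · obtain ⟨w, w', hf', hsub⟩ := exists_isSeparatedFan_of_compIn (p := y) (q := x) h2
      hf.mem_sep hf.mem_left hf.mem hf.left_ne.symm hf.ne hxa (by rwa [Set.insert_comm])
      (by rwa [Set.insert_comm])
    exact ⟨y, a, w, w', hf', hlt (by rwa [Set.insert_comm] at hsub)⟩

lemma exists_isLovaszTriple (hdeg : ∀ z ∈ S, 3 ≤ #{u ∈ S | G.Adj z u})
    (hf : G.IsSeparatedFan S x y a b) : ∃ v a b, G.IsLovaszTriple S v a b := by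
  induction hm : (G.compIn (↑S \ {x, y}) a).ncard using Nat.strong_induction_on
    generalizing x y a b with
  | _ m IH =>
  by_cases hxy : y ∈ G.compIn (↑S \ {a, b}) x
  · exact ⟨x, a, b, hf.isLovaszTriple h2 hxy⟩
  obtain ⟨p, q, a', b', hf', hlt⟩ := hf.exists_ncard_lt h2 hdeg hxy
  exact IH _ (hm ▸ hlt) hf' rfl

end IsSeparatedFan

lemma exists_isLovaszTriple (h2 : ∀ s, G.ConnectedIn (↑S \ {s}))
    (hdeg : ∀ z ∈ S, 3 ≤ #{u ∈ S | G.Adj z u}) (hv : v ∈ S) (hp : p ∈ S) (hq : q ∈ S)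
    (hvp : G.Adj v p) (hvq : G.Adj v q) (hpq : p ≠ q) (hnadj : ¬ G.Adj p q) :
    ∃ v a b, G.IsLovaszTriple S v a b := by
  by_cases h : G.ConnectedIn (↑S \ {p, q})
  · exact ⟨v, p, q, ⟨hv, hp, hq, hvp, hvq, hpq, hnadj, h⟩⟩
  simp only [ConnectedIn, not_forall] at h
  obtain ⟨u, hu, w, hw, huw⟩ := h
  obtain ⟨a, b, hf, -⟩ := exists_isSeparatedFan_of_closed h2 hp hq hpq (mem_compIn_self hu)
    compIn_subset (fun _ hu' _ hw' hadj => adj_mem_compIn_or hu' hw' hadj)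
    ⟨hw.1, fun h => hw.2 (.inr h)⟩ (fun h => hw.2 (.inl h)) (fun h => huw h.2)
  exact hf.exists_isLovaszTriple h2 hdeg

end Fans

section Coloring

open scoped Classical

variable {α : Type*} {S T : Finset V} {a b s v z : V} {k : ℕ}

def ProperOn (G : SimpleGraph V) (S : Finset V) (c : V → α) : Prop :=
  ∀ u ∈ S, ∀ w ∈ S, G.Adj u w → c u ≠ c w

lemma ProperOn.exists_update [Fintype α] [DecidableEq α] {c : V → α}
    (hc : G.ProperOn (S.erase z) c)
    (hz : #({u ∈ S | G.Adj z u}.image c) < Fintype.card α) :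
    ∃ col, G.ProperOn S (Function.update c z col) := by
  obtain ⟨col, -, hcol⟩ := exists_mem_notMem_of_card_lt_card
    (s := {u ∈ S | G.Adj z u}.image c) (t := univ) (by rwa [card_univ])
  have hfree : ∀ u ∈ S, G.Adj z u → c u ≠ col := fun u hu hadj h =>
    hcol (mem_image.2 ⟨u, mem_filter.2 ⟨hu, hadj⟩, h⟩)
  refine ⟨col, fun u hu w hw hadj => ?_⟩
  by_cases huz : u = z
  · subst huz
    rw [Function.update_self, Function.update_of_ne (G.ne_of_adj hadj).symm]
    exact (hfree w hw hadj).symm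
  by_cases hwz : w = z
  · subst hwz
    rw [Function.update_self, Function.update_of_ne huz]
    exact hfree u hu hadj.symm
  rw [Function.update_of_ne huz, Function.update_of_ne hwz]
  exact hc u (mem_erase.2 ⟨huz, hu⟩) w (mem_erase.2 ⟨hwz, hw⟩) hadj

/-- The colours of `B` are permuted so that both colourings agree at `x`. -/
lemma ProperOn.exists_union {A B : Finset V} {x : V} {cA cB : V → α} (hA : G.ProperOn A cA)
    (hB : G.ProperOn B cB) (hAB : A ∩ B ⊆ {x})
    (hsep : ∀ u ∈ A, ∀ w ∈ B, G.Adj u w → u ∈ B ∨ w ∈ A) :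
    ∃ c : V → α, G.ProperOn (A ∪ B) c := by
  let σ := Equiv.swap (cB x) (cA x)
  have hcross : ∀ u ∈ A, ∀ w ∈ B, w ∉ A → G.Adj u w → cA u ≠ σ (cB w) := by
    intro u hu w hw hwA hadj
    have huB := (hsep u hu w hw hadj).resolve_right hwA
    obtain rfl : u = x := mem_singleton.1 (hAB (mem_inter.2 ⟨hu, huB⟩))
    rw [← Equiv.swap_apply_left (cB u) (cA u)]
    exact σ.injective.ne (hB u huB w hw hadj)
  refine ⟨fun z => if z ∈ A then cA z else σ (cB z), fun u hu w hw hadj => ?_⟩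
  by_cases huA : u ∈ A <;> by_cases hwA : w ∈ A <;> simp only [huA, hwA, if_true, if_false]
  · exact hA u huA w hwA hadj
  · exact hcross u huA w ((mem_union.1 hw).resolve_left hwA) hwA hadj
  · exact (hcross w hwA u ((mem_union.1 hu).resolve_left huA) huA hadj.symm).symm
  · exact σ.injective.ne (hB u ((mem_union.1 hu).resolve_left huA) w
      ((mem_union.1 hw).resolve_left hwA) hadj)

lemma exists_properOn_of_not_connectedIn (IH : ∀ T ⊂ S, ∃ c : V → α, G.ProperOn T c)
    (h : ¬ G.ConnectedIn (↑S \ {s})) : ∃ c : V → α, G.ProperOn S c := by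
  simp only [ConnectedIn, not_forall] at h
  obtain ⟨u, hu, w, hw, huw⟩ := h
  set C := G.compIn (↑S \ {s}) u
  obtain ⟨cA, hA⟩ := IH {z ∈ S | z ∈ C ∨ z = s} (filter_ssubset.2 ⟨w, hw.1, by
    rintro (h | rfl); exacts [huw h.2, hw.2 rfl]⟩)
  obtain ⟨cB, hB⟩ := IH {z ∈ S | z ∉ C}
    (filter_ssubset.2 ⟨u, hu.1, not_not.2 (mem_compIn_self hu)⟩)
  obtain ⟨c, hc⟩ := hA.exists_union hB (x := s) (fun z hz => by
    simp only [mem_inter, mem_filter] at hz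
    exact mem_singleton.2 (hz.1.2.resolve_left hz.2.2)) (fun u' hu' w' hw' hadj => by
    simp only [mem_filter] at hu' hw' ⊢
    rcases hu'.2 with hu'C | rfl
    · by_cases hw's : w' = s
      · exact .inr ⟨hw'.1, .inr hw's⟩
      · exact (hw'.2 (adj_mem_compIn hu'C ⟨hw'.1, hw's⟩ hadj)).elim
    · exact .inl ⟨hu'.1, fun h => h.1.2 rfl⟩)
  refine ⟨c, ?_⟩
  convert hc using 1
  ext z
  simp only [mem_union, mem_filter]
  tauto

namespace IsLovaszTriple

variable (hdeg : ∀ z ∈ S, #{u ∈ S | G.Adj z u} ≤ k) (h : G.IsLovaszTriple S v a b)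
include hdeg h

/-- Since `S \ {a, b}` is connected and `v ∉ T`, some `z ∈ T \ {a, b}` has a neighbour outside
`T`: colour `T.erase z` first, then `z` sees fewer than `k` colours. -/
lemma exists_properOn_eq (hTS : T ⊆ S.erase v) (ha : a ∈ T) (hb : b ∈ T) :
    ∃ c : V → Fin k, G.ProperOn T c ∧ c a = c b := by
  have hk : 0 < k :=
    (card_pos.2 ⟨a, mem_filter.2 ⟨h.mem_left, h.adj_left⟩⟩).trans_le (hdeg v h.mem)
  induction T using Finset.strongInduction with
  | H T IH =>
  by_cases hT : ∃ z ∈ T, z ∉ ({a, b} : Set V)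
  · obtain ⟨z₀, hz₀T, hz₀⟩ := hT
    have hv : v ∈ (↑S \ {a, b} : Set V) :=
      Set.mem_diff_pair h.mem (G.ne_of_adj h.adj_left) (G.ne_of_adj h.adj_right)
    obtain ⟨z, ⟨⟨hzS, hzab⟩, hzT⟩, w, hw, hzw, hwT⟩ := h.connectedIn.exists_adj_notMem
      (K := ↑T) ⟨⟨(mem_erase.1 (hTS hz₀T)).2, hz₀⟩, hz₀T⟩ hv
      fun h' => (mem_erase.1 (hTS h')).1 rfl
    have hza : z ≠ a := fun h' => hzab (.inl h')
    have hzb : z ≠ b := fun h' => hzab (.inr h')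
    obtain ⟨c, hc, hcab⟩ := IH (T.erase z) (erase_ssubset hzT) ((erase_subset _ _).trans hTS)
      (mem_erase.2 ⟨hza.symm, ha⟩) (mem_erase.2 ⟨hzb.symm, hb⟩)
    have hdegz : #{u ∈ T | G.Adj z u} < #{u ∈ S | G.Adj z u} :=
      card_lt_card ((ssubset_iff_of_subset (filter_subset_filter _
        (hTS.trans (erase_subset _ _)))).2
          ⟨w, mem_filter.2 ⟨hw.1, hzw⟩, fun h' => hwT (mem_filter.1 h').1⟩)
    obtain ⟨col, hcol⟩ := hc.exists_update (card_image_le.trans_lt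
      (by simpa using hdegz.trans_le (hdeg z hzS)))
    refine ⟨_, hcol, ?_⟩
    rw [Function.update_of_ne hza.symm, Function.update_of_ne hzb.symm, hcab]
  · push Not at hT
    refine ⟨fun _ => ⟨0, hk⟩, fun u hu w hw hadj _ => ?_, rfl⟩
    rcases hT u hu with rfl | rfl <;> rcases hT w hw with rfl | rfl
    exacts [G.irrefl hadj, h.not_adj hadj, h.not_adj hadj.symm, G.irrefl hadj]

lemma exists_properOn : ∃ c : V → Fin k, G.ProperOn S c := by
  have hav := G.ne_of_adj h.adj_left
  have hbv := G.ne_of_adj h.adj_right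
  obtain ⟨c, hc, hcab⟩ := h.exists_properOn_eq hdeg subset_rfl
    (mem_erase.2 ⟨hav.symm, h.mem_left⟩) (mem_erase.2 ⟨hbv.symm, h.mem_right⟩)
  set N := {u ∈ S | G.Adj v u}
  have hbN : b ∈ N := mem_filter.2 ⟨h.mem_right, h.adj_right⟩
  have himage : N.image c ⊆ (N.erase b).image c := by
    intro col hcol
    obtain ⟨u, huN, rfl⟩ := mem_image.1 hcol
    by_cases hub : u = b
    · exact mem_image.2
        ⟨a, mem_erase.2 ⟨h.ne, mem_filter.2 ⟨h.mem_left, h.adj_left⟩⟩, hub ▸ hcab⟩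
    · exact mem_image_of_mem c (mem_erase.2 ⟨hub, huN⟩)
  obtain ⟨col, hcol⟩ := hc.exists_update (by
    calc #(N.image c) ≤ #(N.erase b) := (card_le_card himage).trans card_image_le
      _ < #N := card_erase_lt_of_mem hbN
      _ ≤ Fintype.card (Fin k) := by simpa using hdeg v h.mem)
  exact ⟨_, hcol⟩

end IsLovaszTriple

lemma exists_adj_adj_not_adj (hcl : G.CliqueFree (k + 1)) (hv : #{u ∈ S | G.Adj v u} = k) :
    ∃ p ∈ S, ∃ q ∈ S, G.Adj v p ∧ G.Adj v q ∧ p ≠ q ∧ ¬ G.Adj p q := by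
  set N := {u ∈ S | G.Adj v u}
  have hvN : v ∉ N := fun h => G.irrefl (mem_filter.1 h).2
  have hncl : ¬ G.IsClique (insert v N : Finset V) := fun h =>
    hcl _ ⟨h, by rw [card_insert_of_notMem hvN, hv]⟩
  simp only [IsClique, Set.Pairwise, coe_insert, Set.mem_insert_iff, mem_coe, not_forall] at hncl
  obtain ⟨p, hp, q, hq, hpq, hnadj⟩ := hncl
  rcases hp with rfl | hp
  · rcases hq with rfl | hq
    exacts [(hpq rfl).elim, (hnadj (mem_filter.1 hq).2).elim]
  rcases hq with rfl | hq
  · exact (hnadj (mem_filter.1 hp).2.symm).elim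
  exact ⟨p, (mem_filter.1 hp).1, q, (mem_filter.1 hq).1, (mem_filter.1 hp).2, (mem_filter.1 hq).2,
    hpq, hnadj⟩

lemma exists_properOn_of_sum_le (hk : 3 ≤ k) (hcl : G.CliqueFree (k + 1))
    (hsum : ∀ S : Finset V, ∑ v ∈ S, #{u ∈ S | G.Adj v u} ≤ k * #S) (S : Finset V) :
    ∃ c : V → Fin k, G.ProperOn S c := by
  induction S using Finset.strongInduction with
  | H S IH =>
  obtain rfl | ⟨v, hv⟩ := S.eq_empty_or_nonempty
  · exact ⟨fun _ => ⟨0, by omega⟩, by simp [ProperOn]⟩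
  by_cases hlow : ∃ z ∈ S, #{u ∈ S | G.Adj z u} < k
  · obtain ⟨z, hz, hlt⟩ := hlow
    obtain ⟨c, hc⟩ := IH _ (erase_ssubset hz)
    obtain ⟨col, hcol⟩ := hc.exists_update (card_image_le.trans_lt (by simpa using hlt))
    exact ⟨_, hcol⟩
  push Not at hlow
  have hreg : ∀ z ∈ S, #{u ∈ S | G.Adj z u} = k := fun z hz =>
    ((sum_eq_sum_iff_of_le hlow).1 (le_antisymm (sum_le_sum hlow)
      (by simpa [mul_comm] using hsum S)) z hz).symm
  by_cases h2 : ∀ s, G.ConnectedIn (↑S \ {s})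
  · obtain ⟨p, hp, q, hq, hvp, hvq, hpq, hnadj⟩ := exists_adj_adj_not_adj hcl (hreg v hv)
    obtain ⟨v, a, b, h⟩ := exists_isLovaszTriple h2 (fun z hz => hk.trans (hreg z hz).ge) hv hp
      hq hvp hvq hpq hnadj
    exact h.exists_properOn fun z hz => (hreg z hz).le
  push Not at h2
  obtain ⟨s, hs⟩ := h2
  exact exists_properOn_of_not_connectedIn IH hs

theorem colorable_of_cliqueFree_of_sum_degree_le [Fintype V] (hk : 3 ≤ k)
    (hcl : G.CliqueFree (k + 1))
    (hsum : ∀ S : Finset V, ∑ v ∈ S, #{u ∈ S | G.Adj v u} ≤ k * #S) : G.Colorable k := by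
  obtain ⟨c, hc⟩ := exists_properOn_of_sum_le hk hcl hsum univ
  exact ⟨Coloring.mk c fun {u w} h => hc u (mem_univ u) w (mem_univ w) h⟩

end Coloring

end SimpleGraph

section Digraph

open scoped Classical

variable {V : Type*} {D : V → V → Prop}

lemma underlyingGraph_adj_iff (hasym : ∀ a b, D a b → ¬ D b a) {a b : V} :
    (underlyingGraph D).Adj a b ↔ D a b ∨ D b a :=
  ⟨fun h => h.2, fun h => ⟨by rintro rfl; rcases h with h | h <;> exact hasym _ _ h h, h⟩⟩

lemma underlyingGraph_cliqueFree {m : ℕ} (h : ¬ ∃ f : Fin m → V, Function.Injective f ∧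
      ∀ i j, i ≠ j → (D (f i) (f j) ∨ D (f j) (f i))) :
    (underlyingGraph D).CliqueFree m := by
  rw [SimpleGraph.cliqueFree_iff]
  exact ⟨fun f => h ⟨f, f.injective, fun i j hij => (f.toHom.map_adj hij).2⟩⟩

lemma sum_card_underlyingGraph_adj_le [Fintype V] (hasym : ∀ a b, D a b → ¬ D b a) {n : ℕ}
    (hindeg : ∀ v : V, {u | D u v}.ncard ≤ n) (S : Finset V) :
    ∑ v ∈ S, #{u ∈ S | (underlyingGraph D).Adj v u} ≤ 2 * n * #S := by
  have hsplit : ∀ v,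
      #{u ∈ S | (underlyingGraph D).Adj v u} = #{u ∈ S | D v u} + #{u ∈ S | D u v} := by
    intro v
    rw [← card_union_of_disjoint (disjoint_filter.2 fun _ _ => hasym _ _), ← filter_or]
    simp only [underlyingGraph_adj_iff hasym]
  have hin : ∀ v, #{u ∈ S | D u v} ≤ n := fun v =>
    (Set.ncard_coe_finset _).symm.trans_le
      ((Set.ncard_le_ncard (fun u hu => (mem_filter.1 hu).2) (Set.toFinite _)).trans (hindeg v))
  calc ∑ v ∈ S, #{u ∈ S | (underlyingGraph D).Adj v u}
      = ∑ v ∈ S, #{u ∈ S | D v u} + ∑ v ∈ S, #{u ∈ S | D u v} := by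
        rw [← sum_add_distrib]; exact sum_congr rfl fun v _ => hsplit v
    _ = 2 * ∑ v ∈ S, #{u ∈ S | D u v} := by
        rw [two_mul]
        exact congrArg (· + _) (sum_card_bipartiteAbove_eq_sum_card_bipartiteBelow D)
    _ ≤ 2 * n * #S := by
        rw [mul_assoc, mul_comm n]; gcongr; exact sum_le_card_nsmul _ _ _ fun v _ => hin v

end Digraph

theorem stmt_1 {V : Type*} [Fintype V] (D : V → V → Prop)
    (hasym : ∀ a b, D a b → ¬ D b a) (n : ℕ) (hn : 2 ≤ n)
    (hnotour : ¬ ∃ f : Fin (2 * n + 1) → V, Function.Injective f ∧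
      ∀ i j, i ≠ j → (D (f i) (f j) ∨ D (f j) (f i)))
    (hindeg : ∀ v : V, {u | D u v}.ncard ≤ n) :
    (underlyingGraph D).chromaticNumber ≤ ((2 * n : ℕ) : ℕ∞) :=
  (SimpleGraph.colorable_of_cliqueFree_of_sum_degree_le (by omega)
    (underlyingGraph_cliqueFree hnotour)
    (sum_card_underlyingGraph_adj_le hasym hindeg)).chromaticNumber_le
end

section
/- Let D be a digraph containing no copy of the antidirected path p4, in which every vertex has out-degree at least two. If v is a vertex with out-degree at least 3, x, y, z are three distinct out-neighbors of v, and there is an arc x → y, then: there is an arc x → z, the vertices y and z are non-adjacent, and the in-neighborhood of y and of z both equal exactly {v, x}. -/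
/-!
Every use of `p4`-freeness has one shape: if two vertices have a common out-neighbour and
each has a further out-neighbour, two of these five vertices coincide. Pairing `v` with `x`
(common target `y`), with `y` or `z` (should `y → z` or `z → y` exist), and pairing an extra
in-neighbour `u` of `y` or `z` with `v` and with `x`, the second out-neighbour guaranteed by
the degree condition is always forced onto a vertex it cannot be.
-/

section

variable {V : Type*} {D : V → V → Prop}

lemma ne_of_arc (hirr : ∀ c, ¬ D c c) {a b : V} (h : D a b) : a ≠ b :=
  fun e => hirr a (e ▸ h)

lemma irrefl_of_asymm (hasym : ∀ a b, D a b → ¬ D b a) : ∀ c, ¬ D c c :=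
  fun a h => hasym a a h h

lemma exists_arc_ne (hmin : ∀ u : V, ∃ a b : V, a ≠ b ∧ D u a ∧ D u b) (u t : V) :
    ∃ w, w ≠ t ∧ D u w := by
  obtain ⟨a, b, hab, ha, hb⟩ := hmin u
  by_cases hat : a = t
  · exact ⟨b, hat ▸ hab.symm, hb⟩
  · exact ⟨a, hat, ha⟩

/-- The five vertices would form the path `x ← y → z ← v → w`. -/
lemma eq_or_eq_or_eq_of_not_hasP4 (hirr : ∀ c, ¬ D c c) (hnop4 : ¬ HasP4 D)
    {x y z v w : V} (hyx : D y x) (hyz : D y z) (hvz : D v z) (hvw : D v w)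
    (hyv : y ≠ v) (hxz : x ≠ z) (hwz : w ≠ z) : x = w ∨ x = v ∨ w = y := by
  by_contra! h
  obtain ⟨hxw, hxv, hwy⟩ := h
  exact hnop4 ⟨x, y, z, v, w, (ne_of_arc hirr hyx).symm, hxz, hxv, hxw, ne_of_arc hirr hyz,
    hyv, hwy.symm, (ne_of_arc hirr hvz).symm, hwz.symm, ne_of_arc hirr hvw, hyx, hyz, hvz, hvw⟩

lemma arc_of_arc_of_not_hasP4 (hasym : ∀ a b, D a b → ¬ D b a) (hnop4 : ¬ HasP4 D)
    (hmin : ∀ u : V, ∃ a b : V, a ≠ b ∧ D u a ∧ D u b) {v x y z : V}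
    (hvx : D v x) (hvy : D v y) (hvz : D v z) (hxy : D x y) (hxz : x ≠ z) (hyz : y ≠ z) :
    D x z := by
  have hirr := irrefl_of_asymm hasym
  obtain ⟨w, hwy, hxw⟩ := exists_arc_ne hmin x y
  rcases eq_or_eq_or_eq_of_not_hasP4 hirr hnop4 hxw hxy hvy hvz (ne_of_arc hirr hvx).symm hwy
    hyz.symm with rfl | rfl | hzx
  · exact hxw
  · exact absurd hxw (hasym _ _ hvx)
  · exact absurd hzx.symm hxz

lemma not_arc_of_not_hasP4 (hasym : ∀ a b, D a b → ¬ D b a) (hnop4 : ¬ HasP4 D)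
    (hmin : ∀ u : V, ∃ a b : V, a ≠ b ∧ D u a ∧ D u b) {v x a b : V}
    (hvx : D v x) (hva : D v a) (hvb : D v b) (hxa : D x a) (hxb : x ≠ b) :
    ¬ D a b := by
  have hirr := irrefl_of_asymm hasym
  intro hab
  obtain ⟨w, hwb, haw⟩ := exists_arc_ne hmin a b
  rcases eq_or_eq_or_eq_of_not_hasP4 hirr hnop4 haw hab hvb hvx (ne_of_arc hirr hva).symm hwb
    hxb with rfl | rfl | hxa'
  · exact hasym _ _ hxa haw
  · exact hasym _ _ hva haw
  · exact ne_of_arc hirr hxa hxa'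

/-- Since `v`, `x` and an extra in-neighbour `u` of `y` all point to `y`, a second
out-neighbour of `u` would have to lie in `{x, v} ∩ {z, v} ∩ {z, x} = ∅`. -/
lemma setOf_arc_eq_pair_of_not_hasP4 (hasym : ∀ a b, D a b → ¬ D b a) (hnop4 : ¬ HasP4 D)
    (hmin : ∀ u : V, ∃ a b : V, a ≠ b ∧ D u a ∧ D u b) {v x y z : V}
    (hvx : D v x) (hvy : D v y) (hvz : D v z) (hxy : D x y) (hxz : D x z) (hzy : ¬ D z y)
    (hyz : y ≠ z) :
    {u | D u y} = ({v, x} : Set V) := by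
  have hirr := irrefl_of_asymm hasym
  ext u
  simp only [Set.mem_ofPred_eq, Set.mem_insert_iff, Set.mem_singleton_iff]
  refine ⟨fun huy => ?_, by rintro (rfl | rfl) <;> assumption⟩
  by_contra! hu
  obtain ⟨huv, hux⟩ := hu
  obtain ⟨w, hwy, huw⟩ := exists_arc_ne hmin u y
  have hwxv := eq_or_eq_or_eq_of_not_hasP4 hirr hnop4 huw huy hvy hvx huv hwy
    (ne_of_arc hirr hxy)
  have hwzv := eq_or_eq_or_eq_of_not_hasP4 hirr hnop4 huw huy hvy hvz huv hwy hyz.symm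
  have hwzx := eq_or_eq_or_eq_of_not_hasP4 hirr hnop4 huw huy hxy hxz hux hwy hyz.symm
  have huz : u ≠ z := by rintro rfl; exact hzy huy
  have hvx' := ne_of_arc hirr hvx
  have hvz' := ne_of_arc hirr hvz
  have hxz' := ne_of_arc hirr hxz
  grind

end

theorem stmt_3_general {V : Type*} (D : V → V → Prop)
    (hasym : ∀ a b, D a b → ¬ D b a)
    (hnop4 : ¬ HasP4 D)
    (hmin : ∀ u : V, ∃ a b : V, a ≠ b ∧ D u a ∧ D u b)
    (v x y z : V) (hxz : x ≠ z) (hyz : y ≠ z)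
    (hvx : D v x) (hvy : D v y) (hvz : D v z) (harc : D x y) :
    D x z ∧ ¬ D y z ∧ ¬ D z y ∧
      {u | D u y} = ({v, x} : Set V) ∧ {u | D u z} = ({v, x} : Set V) := by
  have hxy := ne_of_arc (irrefl_of_asymm hasym) harc
  have hxz' := arc_of_arc_of_not_hasP4 hasym hnop4 hmin hvx hvy hvz harc hxz hyz
  have hyz' := not_arc_of_not_hasP4 hasym hnop4 hmin hvx hvy hvz harc hxz
  have hzy' := not_arc_of_not_hasP4 hasym hnop4 hmin hvx hvz hvy hxz' hxy
  exact ⟨hxz', hyz', hzy',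
    setOf_arc_eq_pair_of_not_hasP4 hasym hnop4 hmin hvx hvy hvz harc hxz' hzy' hyz,
    setOf_arc_eq_pair_of_not_hasP4 hasym hnop4 hmin hvx hvz hvy hxz' harc hyz' hyz.symm⟩

theorem stmt_3 {V : Type*} (D : V → V → Prop)
    (hasym : ∀ a b, D a b → ¬ D b a)
    (hnop4 : ¬ HasP4 D)
    (hmin : ∀ u : V, ∃ a b : V, a ≠ b ∧ D u a ∧ D u b)
    (v x y z : V) (hxy : x ≠ y) (hxz : x ≠ z) (hyz : y ≠ z)
    (hvx : D v x) (hvy : D v y) (hvz : D v z) (harc : D x y) :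
    D x z ∧ ¬ D y z ∧ ¬ D z y ∧
      {u | D u y} = ({v, x} : Set V) ∧ {u | D u z} = ({v, x} : Set V) :=
  stmt_3_general D hasym hnop4 hmin v x y z hxz hyz hvx hvy hvz harc
end

section
/- (Gallai–Roy) Every digraph D whose underlying graph has chromatic number n contains a directed path with n vertices (i.e. of length n-1). -/
namespace Relation

variable {V : Type*}

def Acyclic (R : V → V → Prop) : Prop :=
  ∀ x, ¬ TransGen R x x

theorem TransGen.cases_sup_arc {R : V → V → Prop} {a b x y : V}
    (h : TransGen (R ⊔ fun p q => p = a ∧ q = b) x y) :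
    TransGen R x y ∨ ReflTransGen R x a ∧ ReflTransGen R b y := by
  induction h with
  | single h =>
    rcases h with h | ⟨rfl, rfl⟩
    · exact .inl (.single h)
    · exact .inr ⟨.refl, .refl⟩
  | tail _ step ih =>
    rcases step with step | ⟨rfl, rfl⟩
    · rcases ih with ih | ⟨hxa, hby⟩
      · exact .inl (ih.tail step)
      · exact .inr ⟨hxa, hby.tail step⟩
    · rcases ih with ih | ⟨hxa, -⟩
      · exact .inr ⟨ih.to_reflTransGen, .refl⟩
      · exact .inr ⟨hxa, .refl⟩

theorem exists_maximal_acyclic_le [Finite V] (D : V → V → Prop) :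
    ∃ R, Maximal (fun R => R ≤ D ∧ Acyclic R) R :=
  Set.Finite.exists_maximal (Set.toFinite _)
    ⟨⊥, bot_le, fun _ hx => by obtain ⟨_, h, -⟩ := TransGen.head'_iff.1 hx; exact h⟩

section MaximalAcyclic

variable {D R : V → V → Prop}

theorem reflTransGen_of_maximal_acyclic (hR : Maximal (fun R => R ≤ D ∧ Acyclic R) R)
    {a b : V} (hab : D a b) (hn : ¬ R a b) : ReflTransGen R b a := by
  let R' := R ⊔ fun p q => p = a ∧ q = b
  have hR'D : R' ≤ D := sup_le hR.prop.1 fun _ _ ⟨hp, hq⟩ => hp ▸ hq ▸ hab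
  have hcyc : ¬ Acyclic R' := fun hacyc =>
    hn (hR.le_of_ge ⟨hR'D, hacyc⟩ le_sup_left a b (.inr ⟨rfl, rfl⟩))
  obtain ⟨x, hx⟩ : ∃ x, TransGen R' x x := by simpa [Acyclic] using hcyc
  rcases hx.cases_sup_arc with hx | ⟨hxa, hbx⟩
  · exact absurd hx (hR.prop.2 x)
  · exact hbx.trans hxa

end MaximalAcyclic

end Relation

open Relation

section

variable {V : Type*}

theorem List.IsChain.nodup_of_acyclic {R : V → V → Prop} {l : List V} (hl : l.IsChain R)
    (hR : Acyclic R) : l.Nodup := by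
  have hpw : l.Pairwise (TransGen R) := List.isChain_iff_pairwise.1 (hl.imp fun _ _ => .single)
  exact hpw.imp fun {x _} h => by rintro rfl; exact hR x h

theorem List.IsChain.exists_injective_fin {R : V → V → Prop} {l : List V} (hl : l.IsChain R)
    (hnd : l.Nodup) {n : ℕ} (hn : n ≤ l.length) :
    ∃ f : Fin n → V, Function.Injective f ∧
      ∀ i j : Fin n, (j : ℕ) = (i : ℕ) + 1 → R (f i) (f j) := by
  refine ⟨fun i => l[i], fun i j hij => Fin.ext (hnd.getElem_inj_iff.1 hij), ?_⟩
  rintro i ⟨j, hj⟩ (rfl : j = i + 1)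
  exact List.isChain_iff_getElem.1 hl i (by omega)

section Height

variable [Fintype V] (R : V → V → Prop)

open Classical in
/-- The cap `card V` is never reached when `R` is acyclic, since `R`-chains are then
duplicate-free. -/
noncomputable def chainHeight (v : V) : ℕ :=
  Nat.findGreatest (fun k => ∃ l : List V, l.length = k ∧ (l ++ [v]).IsChain R)
    (Fintype.card V)

theorem exists_isChain_length_chainHeight (v : V) :
    ∃ l : List V, l.length = chainHeight R v ∧ (l ++ [v]).IsChain R := by
  classical
  exact Nat.findGreatest_spec (P := fun k => ∃ l : List V, l.length = k ∧ (l ++ [v]).IsChain R)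
    (Nat.zero_le _) ⟨[], rfl, List.isChain_singleton v⟩

variable {R}

theorem chainHeight_lt_of_rel (hR : Acyclic R) {u v : V} (huv : R u v) :
    chainHeight R u < chainHeight R v := by
  classical
  obtain ⟨l, hlen, hl⟩ := exists_isChain_length_chainHeight R u
  have hl' : ((l ++ [u]) ++ [v]).IsChain R :=
    List.isChain_append.2 ⟨hl, List.isChain_singleton v, by simpa using huv⟩
  have hcard : chainHeight R u + 1 ≤ Fintype.card V := by
    have := (hl'.nodup_of_acyclic hR).length_le_card
    simp only [List.length_append, List.length_singleton] at this
    omega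
  exact Nat.le_findGreatest hcard ⟨l ++ [u], by simp [hlen], hl'⟩

theorem chainHeight_lt_of_transGen (hR : Acyclic R) {u v : V} (huv : TransGen R u v) :
    chainHeight R u < chainHeight R v := by
  induction huv with
  | single h => exact chainHeight_lt_of_rel hR h
  | tail _ h ih => exact ih.trans (chainHeight_lt_of_rel hR h)

end Height

theorem chainHeight_ne_of_adj [Fintype V] {D R : V → V → Prop}
    (hR : Maximal (fun R => R ≤ D ∧ Acyclic R) R) {a b : V}
    (hab : (underlyingGraph D).Adj a b) :
    chainHeight R a ≠ chainHeight R b := by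
  have key : ∀ {x y}, x ≠ y → D x y → chainHeight R x ≠ chainHeight R y := by
    intro x y hxy hD
    by_cases hRxy : R x y
    · exact (chainHeight_lt_of_rel hR.prop.2 hRxy).ne
    · obtain rfl | hyx :=
        reflTransGen_iff_eq_or_transGen.1 (reflTransGen_of_maximal_acyclic hR hD hRxy)
      · exact absurd rfl hxy
      · exact (chainHeight_lt_of_transGen hR.prop.2 hyx).ne'
  obtain ⟨hne, hD | hD⟩ := hab
  · exact key hne hD
  · exact (key hne.symm hD).symm

theorem exists_isChain_nodup_colorable [Fintype V] (D : V → V → Prop) :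
    ∃ l : List V, l.IsChain D ∧ l.Nodup ∧ (underlyingGraph D).Colorable l.length := by
  cases isEmpty_or_nonempty V
  · exact ⟨[], .nil, .nil, .of_isEmpty _⟩
  obtain ⟨R, hR⟩ := exists_maximal_acyclic_le D
  obtain ⟨v, hv⟩ := Finite.exists_max (chainHeight R)
  obtain ⟨l, hlen, hl⟩ := exists_isChain_length_chainHeight R v
  refine ⟨l ++ [v], hl.imp hR.prop.1, hl.nodup_of_acyclic hR.prop.2, ?_⟩
  rw [List.length_append, List.length_singleton, hlen]
  exact ⟨.mk (fun w => ⟨chainHeight R w, Nat.lt_succ_of_le (hv w)⟩)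
    fun hab heq => chainHeight_ne_of_adj hR hab (congrArg Fin.val heq)⟩

end

theorem stmt_9_general {V : Type*} [Fintype V] (D : V → V → Prop) (n : ℕ)
    (hchrom : (underlyingGraph D).chromaticNumber = n) :
    ∃ f : Fin n → V, Function.Injective f ∧
      ∀ i j : Fin n, (j : ℕ) = (i : ℕ) + 1 → D (f i) (f j) := by
  obtain ⟨l, hchain, hnodup, hcol⟩ := exists_isChain_nodup_colorable D
  have hn : n ≤ l.length := by exact_mod_cast hchrom ▸ hcol.chromaticNumber_le
  exact hchain.exists_injective_fin hnodup hn

/-- Gallai–Roy. -/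
theorem stmt_9 {V : Type*} [Fintype V] (D : V → V → Prop)
    (hasym : ∀ a b, D a b → ¬ D b a) (n : ℕ)
    (hchrom : (underlyingGraph D).chromaticNumber = n) :
    ∃ f : Fin n → V, Function.Injective f ∧
      ∀ i j : Fin n, (j : ℕ) = (i : ℕ) + 1 → D (f i) (f j) :=
  stmt_9_general D n hchrom
end

section
/- Let F be a maximal spanning out-forest of a digraph D, and let v → w be an arc of D with v of level i and w of level j in F. If k ≤ i < j - l, then D contains a path with two blocks P(k,l). -/
/-- A directed chain (directed path) in `F`, given by an injective enumeration. -/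
def IsDirChain {V : Type*} (F : V → V → Prop) {n : ℕ} (f : Fin (n + 1) → V) : Prop :=
  Function.Injective f ∧ ∀ i j : Fin (n + 1), (j : ℕ) = (i : ℕ) + 1 → F (f i) (f j)

/-- There is a directed path of `F` with `n+1` vertices ending at `v`. -/
def EndsAt {V : Type*} (F : V → V → Prop) (n : ℕ) (v : V) : Prop :=
  ∃ f : Fin (n + 1) → V, IsDirChain F f ∧ f (Fin.last n) = v

/-- The level of `v` in `F` is `i`: the order of a longest directed path of `F`
ending at `v` equals `i`. -/
def LevelIs {V : Type*} (F : V → V → Prop) (v : V) (i : ℕ) : Prop :=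
  1 ≤ i ∧ EndsAt F (i - 1) v ∧ ∀ m, EndsAt F m v → m + 1 ≤ i

/-- There is a directed path in `F` from `u` to `v`. -/
def DirReach {V : Type*} (F : V → V → Prop) (u v : V) : Prop :=
  ∃ (n : ℕ) (f : Fin (n + 1) → V), IsDirChain F f ∧ f 0 = u ∧ f (Fin.last n) = v

/-- `F` is an out-forest: every vertex has in-degree at most one and the
underlying graph is acyclic (so every component is an out-branching). -/
def IsOutForest {V : Type*} (F : V → V → Prop) : Prop :=
  (∀ a b c, F a c → F b c → a = b) ∧ (underlyingGraph F).IsAcyclic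

/-- `F` is a maximal spanning out-forest of `D`: a spanning subdigraph of `D`
which is an out-forest, such that for every arc `x → y` of `D` with
`l_F(x) ≥ l_F(y)` there is a directed path from `y` to `x` in `F`. -/
def IsMaxSpanningOutForest {V : Type*} (D F : V → V → Prop) : Prop :=
  (∀ a b, F a b → D a b) ∧ IsOutForest F ∧
    ∀ x y, D x y → ∀ i j, LevelIs F x i → LevelIs F y j → j ≤ i → DirReach F y x

/-- `D` contains a path with two blocks `P(k,l)`: `k` forward arcs followed by
`l` backward arcs. -/
def HasTwoBlockPath {V : Type*} (D : V → V → Prop) (k l : ℕ) : Prop :=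
  ∃ f : Fin (k + l + 1) → V, Function.Injective f ∧
    (∀ i j : Fin (k + l + 1), (j : ℕ) = (i : ℕ) + 1 → (i : ℕ) < k → D (f i) (f j)) ∧
    (∀ i j : Fin (k + l + 1), (j : ℕ) = (i : ℕ) + 1 → k ≤ (i : ℕ) → D (f j) (f i))

/-! Take the last `k` vertices of a longest `F`-path ending at `v`, cross the arc `v → w`, and go
back `l` arcs along a longest `F`-path ending at `w`. Since `F` has in-degree at most one and no
directed cycles, a vertex at position `t` of a longest path has level `t + 1`; so the first block
has levels at most `i`, the second levels at least `j - l > i`, and all vertices are distinct. -/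

section DirChain

variable {V : Type*} {F : V → V → Prop}

lemma IsDirChain.castLE {n m : ℕ} {f : Fin (n + 1) → V} (hf : IsDirChain F f)
    (h : m + 1 ≤ n + 1) : IsDirChain F (f ∘ Fin.castLE h) :=
  ⟨hf.1.comp (Fin.castLE_injective h), fun _ _ hij => hf.2 _ _ hij⟩

lemma IsDirChain.cons {n : ℕ} {f : Fin (n + 1) → V} (hf : IsDirChain F f) {y : V}
    (hy : y ∉ Set.range f) (hyf : F y (f 0)) :
    IsDirChain F (Fin.cons y f : Fin (n + 2) → V) := by
  refine ⟨Fin.cons_injective_iff.mpr ⟨hy, hf.1⟩, fun i j hij => ?_⟩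
  obtain ⟨j, rfl⟩ : ∃ j' : Fin (n + 1), j = j'.succ :=
    ⟨j.pred (by rintro rfl; simp at hij), (Fin.succ_pred _ _).symm⟩
  cases i using Fin.cases with
  | zero =>
    obtain rfl : j = 0 := Fin.ext (by simpa using hij)
    simpa using hyf
  | succ i => simpa using hf.2 i j (by simp only [Fin.val_succ] at hij; omega)

lemma SimpleGraph.reachable_of_forall_adj {G : SimpleGraph V} :
    ∀ {n : ℕ} {f : Fin (n + 1) → V}, (∀ i j : Fin (n + 1), (j : ℕ) = i + 1 → G.Adj (f i) (f j)) →
      G.Reachable (f 0) (f (Fin.last n))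
  | 0, _, _ => .rfl
  | n + 1, f, hadj => by
    have hhead : G.Adj (f 0) (f 1) := hadj 0 1 (by simp)
    have htail := reachable_of_forall_adj (f := f ∘ Fin.succ)
      fun _ _ hij => hadj _ _ (by simp [hij])
    simpa using hhead.reachable.trans htail

lemma IsDirChain.eq_of_last_eq (hF : ∀ a b c, F a c → F b c → a = b) {n m : ℕ}
    {f : Fin (n + 1) → V} {g : Fin (m + 1) → V} (hf : IsDirChain F f) (hg : IsDirChain F g)
    (hend : f (Fin.last n) = g (Fin.last m)) :
    ∀ {s : ℕ} (hn : s ≤ n) (hm : s ≤ m), f ⟨n - s, by omega⟩ = g ⟨m - s, by omega⟩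
  | 0, _, _ => by simpa [Fin.last] using hend
  | s + 1, hn, hm => hF _ _ _
      (eq_of_last_eq hF hf hg hend (s := s) (by omega) (by omega) ▸
        hf.2 ⟨n - (s + 1), by omega⟩ ⟨n - s, by omega⟩ (by simp only; omega))
      (hg.2 ⟨m - (s + 1), by omega⟩ ⟨m - s, by omega⟩ (by simp only; omega))

end DirChain

namespace IsOutForest

variable {V : Type*} {F : V → V → Prop}

/-- No directed cycles: on three or more vertices the closing arc would not be a bridge of the
underlying graph, and shorter cycles are loops or digons. -/
lemma not_adj_last_zero (hF : IsOutForest F) (hasym : ∀ a b, F a b → ¬ F b a) {n : ℕ}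
    {c : Fin (n + 1) → V} (hc : IsDirChain F c) : ¬ F (c (Fin.last n)) (c 0) := by
  intro hcyc
  rcases n with _ | _ | n
  · exact hasym _ _ hcyc hcyc
  · exact hasym _ _ (hc.2 0 1 rfl) hcyc
  have hne : c (Fin.last (n + 2)) ≠ c 0 := fun h => by simpa using hc.1 h
  have hbridge := SimpleGraph.isAcyclic_iff_forall_adj_isBridge.mp hF.2 ⟨hne, Or.inl hcyc⟩
  refine SimpleGraph.isBridge_iff.mp hbridge (SimpleGraph.reachable_of_forall_adj ?_).symm
  intro i j hij
  have := j.isLt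
  have hval {a b : Fin (n + 3)} (h : c a = c b) : (a : ℕ) = b := congrArg Fin.val (hc.1 h)
  refine (SimpleGraph.deleteEdges_adj ..).mpr ⟨⟨fun h => ?_, Or.inl (hc.2 i j hij)⟩, ?_⟩
  · have := hval h
    omega
  simp only [Set.mem_singleton_iff, Sym2.eq_iff, not_or, not_and]
  refine ⟨fun h _ => ?_, fun h h' => ?_⟩
  · have := hval h
    simp only [Fin.val_last] at this
    omega
  · have hi0 := hval h
    have hjn := hval h'
    simp only [Fin.val_last, Fin.val_zero] at hi0 hjn
    omega

lemma not_adj_head_of_longest (hF : IsOutForest F) (hasym : ∀ a b, F a b → ¬ F b a) {n : ℕ}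
    {g : Fin (n + 1) → V} (hg : IsDirChain F g)
    (hmax : ∀ m, EndsAt F m (g (Fin.last n)) → m ≤ n) (y : V) : ¬ F y (g 0) := by
  intro hy
  by_cases hmem : y ∈ Set.range g
  · obtain ⟨u, rfl⟩ := hmem
    exact hF.not_adj_last_zero hasym (hg.castLE (m := u) u.isLt) hy
  · have := hmax (n + 1) ⟨Fin.cons y g, hg.cons hmem hy, by simp [← Fin.succ_last]⟩
    omega

lemma levelIs_of_longest (hF : IsOutForest F) (hasym : ∀ a b, F a b → ¬ F b a) {n : ℕ}
    {g : Fin (n + 1) → V} (hg : IsDirChain F g)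
    (hmax : ∀ m, EndsAt F m (g (Fin.last n)) → m ≤ n) (t : Fin (n + 1)) :
    LevelIs F (g t) (t + 1) := by
  have hprefix := hg.castLE (m := t) t.isLt
  refine ⟨by omega, ?_, fun m ⟨h, hh, hhe⟩ => ?_⟩
  · rw [Nat.add_sub_cancel]
    exact ⟨_, hprefix, rfl⟩
  by_contra! hlt
  -- `h` agrees with the prefix of `g` up to `g t`, so the vertex of `h` before `g 0` is an
  -- in-neighbour of the head of a longest chain.
  have hhead : h ⟨m - t, by omega⟩ = g 0 := by
    simpa using hh.eq_of_last_eq hF.1 hprefix hhe (s := t) (by omega) le_rfl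
  refine hF.not_adj_head_of_longest hasym hg hmax (h ⟨m - t - 1, by omega⟩) ?_
  exact hhead ▸ hh.2 _ _ (by simp only; omega)

end IsOutForest

lemma LevelIs.unique {V : Type*} {F : V → V → Prop} {x : V} {m m' : ℕ}
    (h : LevelIs F x m) (h' : LevelIs F x m') : m = m' := by
  have := h'.2.2 (m - 1) h.2.1
  have := h.2.2 (m' - 1) h'.2.1
  have := h.1
  have := h'.1
  omega

lemma hasTwoBlockPath_of_longest_chains {V : Type*} {D F : V → V → Prop}
    (hFD : ∀ a b, F a b → D a b) {p q k l : ℕ} {f : Fin (p + 1) → V} {g : Fin (q + 1) → V}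
    (hf : IsDirChain F f) (hg : IsDirChain F g) (hfl : ∀ t, LevelIs F (f t) (t + 1))
    (hgl : ∀ t, LevelIs F (g t) (t + 1)) (harc : D (f (Fin.last p)) (g (Fin.last q)))
    (hk : k ≤ p + 1) (hl : p + l < q) : HasTwoBlockPath D k l := by
  let X : Fin (k + l + 1) → V := fun t =>
    if ht : (t : ℕ) < k then f ⟨p + 1 - k + t, by omega⟩ else g ⟨q + k - t, by omega⟩
  have hX_level (t : Fin (k + l + 1)) :
      LevelIs F (X t) (if (t : ℕ) < k then p + 2 - k + t else q + k - t + 1) := by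
    by_cases ht : (t : ℕ) < k
    · rw [if_pos ht, show p + 2 - k + t = (p + 1 - k + t) + 1 by omega]
      simpa only [X, dif_pos ht] using hfl _
    · simpa only [X, dif_neg ht, if_neg ht] using hgl _
  refine ⟨X, fun t t' heq => ?_, fun t t' htt' ht => ?_, fun t t' htt' ht => ?_⟩
  · have hlev := (hX_level t).unique (heq ▸ hX_level t')
    have := t.isLt
    have := t'.isLt
    split_ifs at hlev <;> exact Fin.ext (by omega)
  · simp only [X, dif_pos ht]
    by_cases ht' : (t' : ℕ) < k
    · simpa only [dif_pos ht'] using hFD _ _ (hf.2 _ _ (by simp only; omega))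
    · simpa only [dif_neg ht', Fin.last, show p + 1 - k + t = p by omega,
        show q + k - t' = q by omega] using harc
  · simp only [X, dif_neg (show ¬ (t : ℕ) < k by omega), dif_neg (show ¬ (t' : ℕ) < k by omega)]
    exact hFD _ _ (hg.2 _ _ (by simp only; omega))

theorem stmt_10 {V : Type*} (D F : V → V → Prop)
    (hasym : ∀ a b, D a b → ¬ D b a)
    (hF : IsMaxSpanningOutForest D F)
    (v w : V) (hvw : D v w) (k l i j : ℕ)
    (hi : LevelIs F v i) (hj : LevelIs F w j)
    (h1 : k ≤ i) (h2 : i + l < j) :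
    HasTwoBlockPath D k l := by
  obtain ⟨hFD, hforest, -⟩ := hF
  have hasymF : ∀ a b, F a b → ¬ F b a := fun a b hab hba => hasym a b (hFD a b hab) (hFD b a hba)
  obtain ⟨hi1, ⟨f, hf, rfl⟩, hfmax⟩ := hi
  obtain ⟨hj1, ⟨g, hg, rfl⟩, hgmax⟩ := hj
  refine hasTwoBlockPath_of_longest_chains hFD hf hg
    (hforest.levelIs_of_longest hasymF hf fun m hm => ?_)
    (hforest.levelIs_of_longest hasymF hg fun m hm => ?_) hvw (by omega) (by omega)
  · have := hfmax m hm
    omega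
  · have := hgmax m hm
    omega
end

section
/- Let F be a maximal spanning out-forest of a digraph D, and let v → w be an arc of D with v of level i and w of level j in F. If k < j ≤ i - l, then D contains a path with two blocks P(k,l). -/
/-!
Follow a longest `F`-path into `w` for its last `k` arcs, step back along `v → w`, and
continue backwards along a longest `F`-path into `v` for `l - 1` more arcs. Because `D` is
asymmetric and the underlying graph of `F` is acyclic, `F` has no directed cycles, so any path
into a vertex of the first piece extends along that piece to a path into `w`: those vertices have
level at most `j`. The vertices of the second piece have level greater than `j`, hence the two
pieces are disjoint.
-/

open SimpleGraph

theorem SimpleGraph.exists_walk_support_eq_ofFn {V : Type*} {G : SimpleGraph V} :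
    ∀ {n : ℕ} (f : Fin (n + 1) → V),
      (∀ i j : Fin (n + 1), (j : ℕ) = i + 1 → G.Adj (f i) (f j)) →
      ∃ p : G.Walk (f 0) (f (Fin.last n)), p.support = List.ofFn f
  | 0, f, _ => ⟨.nil, by simp [List.ofFn_succ]⟩
  | n + 1, f, hadj => by
    obtain ⟨p, hp⟩ := exists_walk_support_eq_ofFn (fun t => f t.succ)
      (fun a b hab => hadj a.succ b.succ (by simp [hab]))
    refine ⟨.cons (hadj 0 (Fin.succ 0) (by simp)) p, ?_⟩
    rw [Walk.support_cons, hp, List.ofFn_succ (f := f)]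

namespace IsDirChain

variable {V : Type*} {F : V → V → Prop} {n : ℕ} {f : Fin (n + 1) → V}

theorem exists_isPath (hf : IsDirChain F f) :
    ∃ p : (underlyingGraph F).Walk (f 0) (f (Fin.last n)),
      p.IsPath ∧ p.length = n ∧ ∀ t : Fin (n + 1), p.getVert t = f t := by
  obtain ⟨p, hp⟩ := exists_walk_support_eq_ofFn (G := underlyingGraph F) f fun i j hij =>
    ⟨fun h => by simpa [hij] using congrArg Fin.val (hf.1 h), Or.inl (hf.2 i j hij)⟩
  have hlen : p.length = n := by simpa [hp] using p.length_support.symm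
  refine ⟨p, ?_, hlen, fun t => ?_⟩
  · rw [Walk.isPath_def, hp, List.nodup_ofFn]
    exact hf.1
  · rw [p.getVert_eq_support_getElem (by omega)]
    simp only [hp, List.getElem_ofFn]

theorem endsAt (hf : IsDirChain F f) (t : Fin (n + 1)) : EndsAt F t (f t) :=
  ⟨fun s => f (Fin.castLE t.2 s),
    ⟨hf.1.comp (Fin.castLE_injective t.2), fun a b hab => hf.2 _ _ hab⟩,
    congrArg f (Fin.ext (by simp))⟩

theorem suffix (hf : IsDirChain F f) (s : ℕ) (hs : s ≤ n) :
    IsDirChain F (fun t : Fin (s + 1) => f ⟨n - s + t, by omega⟩) :=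
  ⟨fun a b hab => Fin.ext (by simpa using congrArg Fin.val (hf.1 hab)),
    fun a b hab => hf.2 _ _ (by simp [hab]; omega)⟩

end IsDirChain

section Forest

variable {V : Type*} {F : V → V → Prop}

theorem EndsAt.succ (hasym : ∀ a b, F a b → ¬ F b a) (hac : (underlyingGraph F).IsAcyclic)
    {m : ℕ} {a b : V} (h : EndsAt F m a) (hab : F a b) : EndsAt F (m + 1) b := by
  obtain ⟨g, hg, rfl⟩ := h
  have hb : b ∉ Set.range g := by
    rintro ⟨s, rfl⟩
    obtain ⟨p, hp, hlen, hvert⟩ := hg.exists_isPath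
    have hadj : (underlyingGraph F).Adj (g (Fin.last m)) (g s) :=
      ⟨fun h => hasym _ _ hab (h ▸ hab), Or.inl hab⟩
    -- the cycle closed by `b` must be a loop or a 2-cycle, as the underlying graph is a forest
    have hpen : g s = p.getVert (m - 1) := by
      rw [hac.eq_penultimate_of_adj_end hp hadj (hvert s ▸ p.getVert_mem_support _),
        Walk.penultimate, hlen]
    rcases m with _ | m
    · exact hadj.ne (congrArg g (Fin.ext (by simp only [Fin.val_last]; omega)))
    · rw [show m + 1 - 1 = ((Fin.castSucc (Fin.last m) : Fin (m + 2)) : ℕ) by simp,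
        hvert] at hpen
      exact hasym _ _ hab (hpen ▸ hg.2 _ _ (by simp))
  refine ⟨Fin.snoc (α := fun _ => V) g b, ⟨Fin.snoc_injective_of_injective hg.1 hb, ?_⟩,
    Fin.snoc_last _ _⟩
  intro i j hij
  rw [show i = Fin.castSucc ⟨i, by omega⟩ from rfl, Fin.snoc_castSucc]
  induction j using Fin.lastCases with
  | last =>
    rw [show (⟨i, _⟩ : Fin (m + 1)) = Fin.last m from
      Fin.ext (by simp only [Fin.val_last] at hij ⊢; omega), Fin.snoc_last]
    exact hab
  | cast j =>
    rw [Fin.snoc_castSucc]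
    exact hg.2 _ _ (by simpa using hij)

theorem IsDirChain.endsAt_last (hasym : ∀ a b, F a b → ¬ F b a)
    (hac : (underlyingGraph F).IsAcyclic) {n : ℕ} {f : Fin (n + 1) → V} (hf : IsDirChain F f)
    (t : Fin (n + 1)) {m : ℕ} (h : EndsAt F m (f t)) :
    EndsAt F (m + (n - t)) (f (Fin.last n)) := by
  induction t using Fin.reverseInduction generalizing m with
  | last => simpa using h
  | cast i ih =>
    have hnext := ih (h.succ hasym hac (hf.2 _ _ (by simp)))
    rwa [Fin.val_succ, show m + 1 + (n - (i + 1)) = m + (n - i) by omega] at hnext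

end Forest

theorem hasTwoBlockPath_of_chains {V : Type*} {D F : V → V → Prop}
    (hFD : ∀ a b, F a b → D a b) {k l : ℕ} {a : Fin (k + 1) → V} {b : Fin (l + 1) → V}
    (ha : IsDirChain F a) (hb : IsDirChain F b) (hba : D (b (Fin.last l)) (a (Fin.last k)))
    (hdisj : ∀ s (t : Fin (l + 1)), 0 < (t : ℕ) → a s ≠ b t) : HasTwoBlockPath D k l := by
  refine ⟨fun t => if h : (t : ℕ) ≤ k then a ⟨t, by omega⟩
      else b ⟨k + l + 1 - t, by omega⟩,
    fun t₁ t₂ he => ?_, fun t₁ t₂ ht hk => ?_, fun t₁ t₂ ht hk => ?_⟩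
  · have := t₁.2; have := t₂.2
    dsimp only at he
    split_ifs at he
    · exact Fin.ext (by simpa using congrArg Fin.val (ha.1 he))
    · exact absurd he (hdisj _ _ (by dsimp only; omega))
    · exact absurd he.symm (hdisj _ _ (by dsimp only; omega))
    · exact Fin.ext (by have := congrArg Fin.val (hb.1 he); simp only at this; omega)
  · simp only [show (t₁ : ℕ) ≤ k by omega, show (t₂ : ℕ) ≤ k by omega, dif_pos]
    exact hFD _ _ (ha.2 _ _ (by simpa using ht))
  · have := t₂.2
    simp only [show ¬ (t₂ : ℕ) ≤ k by omega, dif_neg, not_false_eq_true]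
    rcases hk.eq_or_lt with hk | hk
    · simp only [← hk, le_refl, dif_pos]
      convert hba using 2 <;> ext <;> simp
      omega
    · simp only [show ¬ (t₁ : ℕ) ≤ k by omega, dif_neg, not_false_eq_true]
      exact hFD _ _ (hb.2 _ _ (by simp only; omega))

theorem stmt_11 {V : Type*} (D F : V → V → Prop)
    (hasym : ∀ a b, D a b → ¬ D b a)
    (hF : IsMaxSpanningOutForest D F)
    (v w : V) (hvw : D v w) (k l i j : ℕ)
    (hi : LevelIs F v i) (hj : LevelIs F w j)
    (h1 : k < j) (h2 : j + l ≤ i) :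
    HasTwoBlockPath D k l := by
  obtain ⟨hFD, ⟨-, hac⟩, -⟩ := hF
  have hFasym : ∀ a b, F a b → ¬ F b a := fun a b h h' => hasym a b (hFD a b h) (hFD b a h')
  obtain ⟨-, ⟨cv, hcv, rfl⟩, -⟩ := hi
  obtain ⟨-, ⟨cw, hcw, rfl⟩, hwmax⟩ := hj
  refine hasTwoBlockPath_of_chains hFD (hcw.suffix k (by omega)) (hcv.suffix l (by omega))
    (by convert hvw using 2 <;> ext <;> simp <;> omega) fun s t ht he => ?_
  have hlong := hcv.endsAt ⟨i - 1 - l + t, by omega⟩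
  rw [← he] at hlong
  have hle := hwmax _ (hcw.endsAt_last hFasym hac _ hlong)
  simp only at hle
  omega
end

section
/- Every digraph D exists a maximal spanning out-forest: a spanning out-forest F such that for every arc x → y of D with l_F(x) ≥ l_F(y), there is a directed path from y to x in F. -/
/-!
Encode a spanning out-forest of `D` by a parent map `p` together with its depth function `r`,
and take one maximising `∑ v, r v` (depths are below `card V`, so the maximum exists).
The level of `v` is then `r v + 1`. If an arc `x → y` had `r y ≤ r x` while `y` is not an
ancestor of `x`, re-hanging the subtree of `y` below `x` would give another spanning out-forest
in which every depth in that subtree grows by `r x + 1 - r y > 0`, contradicting maximality.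
-/

theorem LevelIs.unique_s12 {V : Type*} {F : V → V → Prop} {v : V} {i j : ℕ} (hi : LevelIs F v i)
    (hj : LevelIs F v j) : i = j := by
  have := hi.2.2 _ hj.2.1
  have := hj.2.2 _ hi.2.1
  omega

theorem DirReach.refl {V : Type*} (F : V → V → Prop) (v : V) : DirReach F v v :=
  ⟨0, fun _ => v, ⟨fun i j _ => Fin.ext (by omega), fun i j h => by omega⟩, rfl, rfl⟩

namespace OutForest

variable {V : Type*}

/-- `parentRel p a b`: `a` is the parent of `b`; roots are the vertices with `p v = none`. -/
def parentRel (p : V → Option V) : V → V → Prop := fun a b => p b = some a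

def up (p : V → Option V) (v : V) : V := (p v).getD v

/-- `r` is the depth function of the forest described by `p`. -/
structure IsGraded (p : V → Option V) (r : V → ℕ) : Prop where
  rank_of_parent : ∀ {u v}, p v = some u → r v = r u + 1
  rank_of_root : ∀ {v}, p v = none → r v = 0

variable {p : V → Option V} {r : V → ℕ}

theorem up_eq_of_parent {u v : V} (h : p v = some u) : up p v = u := by
  simp [up, h]

namespace IsGraded

variable (hg : IsGraded p r)
include hg

theorem parent_up {v : V} (hv : r v ≠ 0) : p v = some (up p v) := by
  cases hpv : p v with
  | none => exact absurd (hg.rank_of_root hpv) hv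
  | some a => simp [up, hpv]

theorem rank_iterate_up_add (v : V) {k : ℕ} (hk : k ≤ r v) : r ((up p)^[k] v) + k = r v := by
  induction k with
  | zero => rfl
  | succ k ih =>
    have hIH := ih (by omega)
    have := hg.rank_of_parent (hg.parent_up (v := (up p)^[k] v) (by omega))
    rw [Function.iterate_succ_apply']
    omega

theorem isDirChain_iterate_up (v : V) {m : ℕ} (hm : m ≤ r v) :
    IsDirChain (parentRel p) (fun i : Fin (m + 1) => (up p)^[m - i] v) := by
  constructor
  · intro i j hij
    have hi := hg.rank_iterate_up_add v (k := m - i) (by omega)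
    have hj := hg.rank_iterate_up_add v (k := m - j) (by omega)
    simp only at hij
    rw [hij] at hi
    exact Fin.ext (by omega)
  · intro i j hij
    have hj := j.isLt
    have hstep : m - i = m - j + 1 := by omega
    have hrj := hg.rank_iterate_up_add v (k := m - j) (by omega)
    change p ((up p)^[m - j] v) = some ((up p)^[m - i] v)
    rw [hstep, Function.iterate_succ_apply']
    exact hg.parent_up (by omega)

theorem endsAt_of_le_rank (v : V) {m : ℕ} (hm : m ≤ r v) : EndsAt (parentRel p) m v :=
  ⟨_, hg.isDirChain_iterate_up v hm, by simp⟩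

theorem dirReach_of_iterate_up {x y : V} {k : ℕ} (hk : k ≤ r x) (hxy : (up p)^[k] x = y) :
    DirReach (parentRel p) y x :=
  ⟨k, _, hg.isDirChain_iterate_up x hk, by simpa using hxy, by simp⟩

theorem rank_lt_card [Fintype V] (v : V) : r v < Fintype.card V := by
  obtain ⟨f, hf, -⟩ := hg.endsAt_of_le_rank v le_rfl
  simpa using Fintype.card_le_of_injective f hf.1

end IsGraded

section RankOfParent

variable (hr : ∀ {u v}, p v = some u → r v = r u + 1)
include hr

theorem le_rank_of_isDirChain {n : ℕ} {f : Fin (n + 1) → V} (hf : IsDirChain (parentRel p) f)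
    (i : Fin (n + 1)) : (i : ℕ) ≤ r (f i) := by
  obtain ⟨i, hi⟩ := i
  induction i with
  | zero => exact Nat.zero_le _
  | succ k ih =>
    have := hr (hf.2 ⟨k, by omega⟩ ⟨k + 1, hi⟩ rfl)
    have := ih (by omega)
    simp only at *
    omega

theorem le_rank_of_endsAt {m : ℕ} {v : V} (h : EndsAt (parentRel p) m v) : m ≤ r v := by
  obtain ⟨f, hf, rfl⟩ := h
  simpa using le_rank_of_isDirChain hr hf (Fin.last m)

theorem exists_iterate_up_of_dirReach {x y : V} (h : DirReach (parentRel p) y x) :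
    ∃ k ≤ r x, (up p)^[k] x = y := by
  obtain ⟨n, f, hf, rfl, rfl⟩ := h
  have key : ∀ k (hk : k ≤ n), (up p)^[k] (f (Fin.last n)) = f ⟨n - k, by omega⟩ := by
    intro k hk
    induction k with
    | zero => rfl
    | succ k ih =>
      rw [Function.iterate_succ_apply', ih (by omega)]
      exact up_eq_of_parent
        (hf.2 ⟨n - (k + 1), by omega⟩ ⟨n - k, by omega⟩ (by dsimp only; omega))
  exact ⟨n, le_rank_of_endsAt hr ⟨f, hf, rfl⟩, by simpa using key n le_rfl⟩

theorem parent_of_adj_of_rank_le {u w : V} (hadj : (underlyingGraph (parentRel p)).Adj u w)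
    (hle : r w ≤ r u) : p u = some w := by
  rcases hadj.2 with h | h
  · have := hr h
    omega
  · exact h

theorem isOutForest : IsOutForest (parentRel p) := by
  refine ⟨fun a b c hac hbc => Option.some_injective V (hac.symm.trans hbc), fun v c hc => ?_⟩
  classical
  obtain ⟨u, hu, hmax⟩ := c.support.toFinset.exists_max_image r ⟨v, by simp⟩
  rw [List.mem_toFinset] at hu
  -- Both cycle-neighbours of a vertex of maximal depth would have to be its parent.
  set c' := c.rotate u hu
  have hc' : c'.IsCycle := hc.rotate hu
  have hle : ∀ i, r (c'.getVert i) ≤ r u := fun i =>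
    hmax _ (List.mem_toFinset.mpr ((c.mem_support_rotate_iff u hu).mp (c'.getVert_mem_support i)))
  have hsnd := parent_of_adj_of_rank_le hr (c'.adj_snd hc'.not_nil) (hle 1)
  have hpen := parent_of_adj_of_rank_le hr (c'.adj_penultimate hc'.not_nil).symm (hle _)
  exact hc'.snd_ne_penultimate (Option.some_injective V (hsnd.symm.trans hpen))

end RankOfParent

theorem IsGraded.levelIs (hg : IsGraded p r) (v : V) : LevelIs (parentRel p) v (r v + 1) :=
  ⟨by omega, hg.endsAt_of_le_rank v le_rfl,
    fun _ hm => Nat.succ_le_succ (le_rank_of_endsAt hg.rank_of_parent hm)⟩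

theorem IsGraded.dirReach_iff (hg : IsGraded p r) {x y : V} :
    DirReach (parentRel p) y x ↔ ∃ k ≤ r x, (up p)^[k] x = y :=
  ⟨exists_iterate_up_of_dirReach hg.rank_of_parent,
    fun ⟨_, hk, hxy⟩ => hg.dirReach_of_iterate_up hk hxy⟩

theorem IsGraded.dirReach_iff_of_parent (hg : IsGraded p r) {y u v : V} (hvy : v ≠ y)
    (hpv : p v = some u) : DirReach (parentRel p) y v ↔ DirReach (parentRel p) y u := by
  have hrv := hg.rank_of_parent hpv
  rw [hg.dirReach_iff, hg.dirReach_iff]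
  constructor
  · rintro ⟨k, hk, hky⟩
    obtain ⟨k, rfl⟩ : ∃ k', k = k' + 1 :=
      Nat.exists_eq_succ_of_ne_zero (by rintro rfl; exact hvy hky)
    exact ⟨k, by omega, by rwa [Function.iterate_succ_apply, up_eq_of_parent hpv] at hky⟩
  · rintro ⟨k, hk, hky⟩
    exact ⟨k + 1, by omega, by rwa [Function.iterate_succ_apply, up_eq_of_parent hpv]⟩

/-- The depths after moving the subtree of `y` below `x`. -/
noncomputable def rehangRank (p : V → Option V) (r : V → ℕ) (x y : V) (v : V) : ℕ :=
  open Classical in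
  if DirReach (parentRel p) y v then r v + (r x + 1 - r y) else r v

theorem sum_lt_sum_rehangRank [Fintype V] {x y : V} (hle : r y ≤ r x) :
    ∑ v, r v < ∑ v, rehangRank p r x y v := by
  refine Finset.sum_lt_sum (fun v _ => ?_) ⟨y, Finset.mem_univ y, ?_⟩
  · unfold rehangRank
    split_ifs <;> omega
  · simp only [rehangRank, if_pos (DirReach.refl _ _)]
    omega

section Rehang

variable [DecidableEq V] {x y : V}

theorem IsGraded.rehang (hg : IsGraded p r) (hle : r y ≤ r x)
    (hyx : ¬ DirReach (parentRel p) y x) :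
    IsGraded (Function.update p y (some x)) (rehangRank p r x y) := by
  constructor
  · intro u v hpv
    by_cases hvy : v = y
    · subst hvy
      obtain rfl : x = u := by simpa using hpv
      simp only [rehangRank, if_pos (DirReach.refl _ _), if_neg hyx]
      omega
    · rw [Function.update_of_ne hvy] at hpv
      have hiff := hg.dirReach_iff_of_parent hvy hpv
      have := hg.rank_of_parent hpv
      unfold rehangRank
      split_ifs <;> (try omega) <;> tauto
  · intro v hpv
    have hvy : v ≠ y := by rintro rfl; simp at hpv
    rw [Function.update_of_ne hvy] at hpv
    have hr0 := hg.rank_of_root hpv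
    have hv : ¬ DirReach (parentRel p) y v := by
      rw [hg.dirReach_iff, hr0]
      rintro ⟨k, hk, rfl⟩
      exact hvy (by rw [Nat.le_zero.mp hk]; rfl)
    simp [rehangRank, hv, hr0]

theorem parentRel_update_le {D : V → V → Prop} (hD : ∀ a b, parentRel p a b → D a b)
    (hxy : D x y) : ∀ a b, parentRel (Function.update p y (some x)) a b → D a b := by
  intro a b hab
  by_cases hby : b = y
  · subst hby
    obtain rfl : x = a := by simpa [parentRel] using hab
    exact hxy
  · exact hD a b (by simpa [parentRel, hby] using hab)

end Rehang

theorem exists_isGraded_maximal [Fintype V] (D : V → V → Prop) :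
    ∃ p r, IsGraded p r ∧ (∀ a b, parentRel p a b → D a b) ∧
      ∀ p' r', IsGraded p' r' → (∀ a b, parentRel p' a b → D a b) →
        ∑ v, r' v ≤ ∑ v, r v := by
  set S : Set ℕ :=
    {n | ∃ p r, IsGraded p r ∧ (∀ a b, parentRel p a b → D a b) ∧ ∑ v, r v = n}
  have hne : S.Nonempty :=
    ⟨0, fun _ => none, fun _ => 0, ⟨fun h => by simp at h, fun _ => rfl⟩,
      fun _ _ h => by simp [parentRel] at h, by simp⟩
  have hbdd : BddAbove S := by
    refine ⟨Fintype.card V * Fintype.card V, ?_⟩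
    rintro _ ⟨p, r, hg, -, rfl⟩
    calc ∑ v, r v ≤ ∑ _v : V, Fintype.card V :=
          Finset.sum_le_sum fun v _ => (hg.rank_lt_card v).le
      _ = Fintype.card V * Fintype.card V := by simp
  obtain ⟨_, ⟨p, r, hg, hD, rfl⟩, hmax⟩ := hbdd.exists_isGreatest_of_nonempty hne
  exact ⟨p, r, hg, hD, fun p' r' hg' hD' => hmax ⟨p', r', hg', hD', rfl⟩⟩

end OutForest

open OutForest in
theorem stmt_12_general {V : Type*} [Fintype V] (D : V → V → Prop) :
    ∃ F : V → V → Prop, IsMaxSpanningOutForest D F := by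
  classical
  obtain ⟨p, r, hg, hD, hmax⟩ := exists_isGraded_maximal D
  refine ⟨parentRel p, hD, isOutForest hg.rank_of_parent, ?_⟩
  intro x y hxy i j hi hj hji
  rw [hi.unique_s12 (hg.levelIs x), hj.unique_s12 (hg.levelIs y)] at hji
  by_contra hyx
  have hle : r y ≤ r x := by omega
  have := hmax _ _ (hg.rehang hle hyx) (parentRel_update_le hD hxy)
  have := sum_lt_sum_rehangRank (p := p) hle
  omega

theorem stmt_12 {V : Type*} [Fintype V] (D : V → V → Prop)
    (hasym : ∀ a b, D a b → ¬ D b a) :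
    ∃ F : V → V → Prop, IsMaxSpanningOutForest D F :=
  stmt_12_general D
end
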